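/- If p · limsup_{n→∞} M_n^{1/n} < 1, where M_n is the number of vertices of T at distance n from the root, then Σ_{σ ∈ T, σ ≠ root} p^{|σ|} < ∞, and hence almost surely Σ_{σ ∈ T, σ ≠ root} C_σ < ∞. -/

import Mathlib

open MeasureTheory ProbabilityTheory Filter
open scoped ENNReal NNReal

/-- An infinite, locally finite rooted tree, modeled as a set of finite sequences of
natural numbers: it contains the empty sequence (the root), is closed under taking
prefixes, is infinite, and every vertex has only finitely many one-step extensions. -/
structure LFTree : Type where
  carrier : Set (List ℕ)
  root_mem : [] ∈ carrier
  prefix_closed : ∀ ⦃σ : List ℕ⦄, σ ∈ carrier → ∀ ⦃τ : List ℕ⦄, τ <+: σ → τ ∈ carrier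
  infinite : carrier.Infinite
  locallyFinite : ∀ σ ∈ carrier, {n : ℕ | σ ++ [n] ∈ carrier}.Finite

namespace LFTree

/-- The length-`n` initial prefix of an infinite sequence. -/
def pref (s : ℕ → ℕ) (n : ℕ) : List ℕ :=
  List.ofFn fun i : Fin n => s i

/-- A ray of `T`: an infinite sequence of natural numbers all of whose finite
prefixes lie in `T`. -/
def IsRay (T : LFTree) (s : ℕ → ℕ) : Prop :=
  ∀ n : ℕ, pref s n ∈ T.carrier

/-- A cutset: a finite set of non-root vertices of `T` such that every ray has a
prefix in it, and no element is a (proper) prefix of another. -/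
def IsCutset (T : LFTree) (c : Finset (List ℕ)) : Prop :=
  (∀ σ ∈ c, σ ∈ T.carrier ∧ σ ≠ []) ∧
  (∀ s : ℕ → ℕ, T.IsRay s → ∃ σ ∈ c, ∃ n : ℕ, σ = pref s n) ∧
  (∀ σ ∈ c, ∀ τ ∈ c, σ <+: τ → σ = τ)

/-- The branching number of `T`:
`br T = inf {λ > 0 : inf over cutsets Π of Σ_{σ ∈ Π} λ^{-|σ|} = 0}`. -/
noncomputable def br (T : LFTree) : ℝ :=
  sInf {l : ℝ | 0 < l ∧ ∀ ε : ℝ, 0 < ε →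
    ∃ c : Finset (List ℕ), T.IsCutset c ∧ ∑ σ ∈ c, l ^ (-(σ.length : ℤ)) < ε}

/-- The set of non-root vertices of `T`, as a type. -/
def Vertex (T : LFTree) : Type :=
  {σ : List ℕ // σ ∈ T.carrier ∧ σ ≠ []}

/-- A flow on `T`: a nonnegative function on the non-root vertices (modeled as a
function on all finite sequences) satisfying the conservation law
`θ(σ) = Σ_{τ a child of σ in T} θ(τ)` at every non-root vertex `σ` of `T`. -/
def IsFlow (T : LFTree) (θ : List ℕ → ℝ) : Prop :=
  (∀ σ : List ℕ, σ ∈ T.carrier → σ ≠ [] → 0 ≤ θ σ) ∧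
  (∀ σ : List ℕ, σ ∈ T.carrier → σ ≠ [] →
    θ σ = ∑' n : {n : ℕ // σ ++ [n] ∈ T.carrier}, θ (σ ++ [n.1]))

/-- A flow is nonzero when the total flow out of the root is positive. -/
def FlowNonzero (T : LFTree) (θ : List ℕ → ℝ) : Prop :=
  0 < ∑' n : {n : ℕ // [n] ∈ T.carrier}, θ [n.1]

end LFTree

/-- `cumul Aσ σ ω = ∏_{0 < τ ≤ σ} A_τ(ω)`, the product of the values `A_τ`
over the non-root prefixes `τ` of `σ`. -/
noncomputable def cumul {Ω : Type*} (Aσ : List ℕ → Ω → ℝ) (σ : List ℕ) (ω : Ω) : ℝ :=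
  ∏ i ∈ Finset.range σ.length, Aσ (σ.take (i + 1)) ω

/-- `p = min_{0 ≤ x ≤ 1} E[A^x]`, the expectations taken in `[0,∞]`. -/
noncomputable def pval {Ω : Type*} [MeasurableSpace Ω] (μ : Measure Ω) (A : Ω → ℝ) : ℝ≥0∞ :=
  ⨅ x ∈ Set.Icc (0 : ℝ) 1, ∫⁻ ω, ENNReal.ofReal (A ω ^ x) ∂μ

/-- The number of vertices of `T` at distance `n` from the root. -/
noncomputable def LFTree.levelCard (T : LFTree) (n : ℕ) : ℕ :=
  Nat.card {σ : List ℕ // σ ∈ T.carrier ∧ σ.length = n}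

/-!
Pick `x ∈ [0, 1]` with `E[A^x] · limsup M_n^{1/n} < 1`; this is possible because `A > 0` makes
`p > 0`, so the limsup is finite. By independence `E[C_σ^x] = E[A^x]^{|σ|}`, and grouping the
vertices by level, the root test gives `Σ_σ E[A^x]^{|σ|} < ∞`, a series that dominates
`Σ_σ p^{|σ|}`. Hence `Σ_σ C_σ^x < ∞` almost surely; then `C_σ ≤ 1` for all but finitely many `σ`,
and for those `C_σ ≤ C_σ^x`, so `Σ_σ C_σ < ∞` as well.
-/

namespace ENNReal

variable {ι : Type*}

theorem tsum_ne_top_of_eventually_le {f g : ι → ℝ≥0∞} (hf : ∀ i, f i ≠ ∞)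
    (hfg : ∀ᶠ i in cofinite, f i ≤ g i) (hg : ∑' i, g i ≠ ∞) : ∑' i, f i ≠ ∞ := by
  have hs : {i | ¬f i ≤ g i}.Finite := hfg
  rw [← ENNReal.sum_add_tsum_compl hs.toFinset]
  refine ENNReal.add_ne_top.2 ⟨ENNReal.sum_ne_top.2 fun i _ => hf i, ne_top_of_le_ne_top hg ?_⟩
  calc ∑' i : ↥(hs.toFinset : Set ι)ᶜ, f i ≤ ∑' i : ↥(hs.toFinset : Set ι)ᶜ, g i :=
        ENNReal.tsum_le_tsum fun i => by simpa using i.2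
    _ ≤ ∑' i, g i := tsum_comp_le_tsum_of_injective Subtype.val_injective g

theorem tsum_ne_top_of_tsum_rpow_ne_top {c : ι → ℝ≥0∞} (hc : ∀ i, c i ≠ ∞) {x : ℝ}
    (hx₀ : 0 ≤ x) (hx₁ : x ≤ 1) (h : ∑' i, c i ^ x ≠ ∞) : ∑' i, c i ≠ ∞ := by
  refine tsum_ne_top_of_eventually_le hc ?_ h
  filter_upwards [(tendsto_cofinite_zero_of_tsum_ne_top h).eventually (gt_mem_nhds one_pos)]
    with i hi
  have hci : c i ≤ 1 := by
    by_contra! hlt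
    exact hi.not_ge (by simpa using rpow_le_rpow hlt.le hx₀)
  simpa using rpow_le_rpow_of_exponent_ge hci hx₁

theorem tsum_mul_pow_ne_top_of_mul_limsup_lt_one {a : ℕ → ℝ≥0∞} (ha : ∀ n, a n ≠ ∞)
    {q : ℝ≥0∞} (hq : q ≠ ∞) (h : q * limsup (fun n : ℕ => a n ^ (n : ℝ)⁻¹) atTop < 1) :
    ∑' n, a n * q ^ n ≠ ∞ := by
  obtain ⟨ρ, hlt, hρ⟩ := exists_between h
  rw [← limsup_const_mul_of_ne_top hq] at hlt
  refine tsum_ne_top_of_eventually_le (fun n => mul_ne_top (ha n) (pow_ne_top hq)) ?_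
    (tsum_geometric_lt_top.2 hρ).ne
  rw [Nat.cofinite_eq_atTop]
  filter_upwards [eventually_lt_of_limsup_lt hlt, eventually_ne_atTop 0] with n hn hn₀
  calc a n * q ^ n = (q * a n ^ (n : ℝ)⁻¹) ^ n := by
        rw [mul_pow, ← rpow_natCast (a n ^ _), rpow_inv_rpow (by exact_mod_cast hn₀), mul_comm]
    _ ≤ ρ ^ n := pow_le_pow_left' hn.le n

theorem exists_mem_mul_lt_of_biInf_mul_lt {s : Set ι} {f : ι → ℝ≥0∞} {a b : ℝ≥0∞}
    (ha₀ : a ≠ 0) (ha : a ≠ ∞) (h : (⨅ i ∈ s, f i) * a < b) : ∃ i ∈ s, f i * a < b := by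
  simpa [iInf_mul_of_ne ha₀ ha, iInf_lt_iff] using h

end ENNReal

namespace LFTree

variable (T : LFTree)

instance : Countable T.Vertex :=
  inferInstanceAs (Countable {σ : List ℕ // σ ∈ T.carrier ∧ σ ≠ []})

def level (n : ℕ) : Set (List ℕ) :=
  {σ | σ ∈ T.carrier ∧ σ.length = n}

theorem finite_level (n : ℕ) : (T.level n).Finite := by
  induction n with
  | zero =>
    refine (Set.finite_singleton []).subset fun σ hσ => ?_
    simpa [List.length_eq_zero_iff] using hσ.2
  | succ n ih =>
    refine (ih.biUnion fun σ hσ => (T.locallyFinite σ hσ.1).image (σ ++ [·])).subset ?_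
    rintro τ ⟨hτ, hlen⟩
    have hne : τ ≠ [] := by rintro rfl; simp at hlen
    refine Set.mem_biUnion (x := τ.dropLast) ⟨T.prefix_closed hτ τ.dropLast_prefix, by simp [hlen]⟩
      ⟨τ.getLast hne, ?_, τ.dropLast_append_getLast hne⟩
    simpa [τ.dropLast_append_getLast hne] using hτ

theorem level_nonempty (n : ℕ) : (T.level n).Nonempty := by
  obtain ⟨σ, hσ, hσn⟩ :=
    T.infinite.exists_notMem_finite ((Set.finite_Iio n).biUnion fun k _ => T.finite_level k)
  have hle : n ≤ σ.length := by
    by_contra! hlt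
    exact hσn (Set.mem_biUnion hlt ⟨hσ, rfl⟩)
  exact ⟨σ.take n, T.prefix_closed hσ (σ.take_prefix n), by simpa using hle⟩

theorem one_le_levelCard (n : ℕ) : 1 ≤ T.levelCard n :=
  have := (T.finite_level n).to_subtype
  have := (T.level_nonempty n).to_subtype
  Nat.card_pos (α := T.level n)

theorem one_le_limsup_levelCard_rpow :
    1 ≤ limsup (fun n : ℕ => (T.levelCard n : ℝ≥0∞) ^ (n : ℝ)⁻¹) atTop := by
  refine le_limsup_of_frequently_le (Frequently.of_forall fun n => ?_)
  have h : (1 : ℝ≥0∞) ≤ T.levelCard n := by exact_mod_cast T.one_le_levelCard n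
  simpa using ENNReal.rpow_le_rpow h (inv_nonneg.2 n.cast_nonneg)

theorem tsum_pow_length_le (b : ℝ≥0∞) :
    ∑' v : T.Vertex, b ^ v.1.length ≤ ∑' n, (T.levelCard n : ℝ≥0∞) * b ^ n := by
  let toLevel : T.Vertex → Σ n, T.level n := fun v => ⟨v.1.length, v.1, v.2.1, rfl⟩
  have hinj : Function.Injective toLevel := fun v w h => Subtype.ext congr($h.2.1)
  calc ∑' v : T.Vertex, b ^ v.1.length = ∑' v : T.Vertex, b ^ (toLevel v).1 := rfl
    _ ≤ ∑' p : Σ n, T.level n, b ^ p.1 :=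
        ENNReal.tsum_comp_le_tsum_of_injective hinj fun p => b ^ p.1
    _ = ∑' n, ∑' _ : T.level n, b ^ n := ENNReal.tsum_sigma' _
    _ = ∑' n, (T.levelCard n : ℝ≥0∞) * b ^ n := by
        refine tsum_congr fun n => ?_
        have := (T.finite_level n).fintype
        rw [tsum_fintype, Finset.sum_const, Finset.card_univ, nsmul_eq_mul, LFTree.levelCard,
          ← Nat.card_eq_fintype_card]
        rfl

namespace Vertex

variable {T : LFTree}

/-- The prefix of `v` of length `i + 1`; this is `v` itself once `i + 1 ≥ |v|`. -/
def ancestor (v : T.Vertex) (i : ℕ) : T.Vertex :=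
  ⟨v.1.take (i + 1), T.prefix_closed v.2.1 (v.1.take_prefix _), by simpa using v.2.2⟩

theorem ancestor_injOn (v : T.Vertex) : Set.InjOn v.ancestor (Finset.range v.1.length) := by
  intro i hi j hj hij
  have := congr(($hij).1.length)
  simp only [ancestor, List.length_take] at this
  simp only [Finset.coe_range, Set.mem_Iio] at hi hj
  omega

theorem cumul_eq_prod_ancestor {Ω : Type*} (Aσ : List ℕ → Ω → ℝ) (v : T.Vertex) (ω : Ω) :
    cumul Aσ v.1 ω = ∏ i ∈ Finset.range v.1.length, Aσ (v.ancestor i).1 ω :=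
  rfl

end Vertex

end LFTree

section RandomWeights

variable {Ω : Type*} [MeasurableSpace Ω] {μ : Measure Ω}

theorem lintegral_prod_comp_eq_pow_of_iIndepFun {ι κ : Type*} {X : ι → Ω → ℝ≥0∞}
    (hX : iIndepFun X μ) (hm : ∀ i, Measurable (X i)) {q : ℝ≥0∞} (hq : ∀ i, ∫⁻ ω, X i ω ∂μ = q)
    {f : κ → ι} {s : Finset κ} (hf : Set.InjOn f s) :
    ∫⁻ ω, ∏ k ∈ s, X (f k) ω ∂μ = q ^ s.card := by
  classical
  calc ∫⁻ ω, ∏ k ∈ s, X (f k) ω ∂μ = ∫⁻ ω, ∏ i ∈ s.image f, X i ω ∂μ := by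
        simp_rw [Finset.prod_image hf]
    _ = ∏ i ∈ s.image f, ∫⁻ ω, X i ω ∂μ := lintegral_prod_eq_prod_lintegral_of_indepFun _ _ hX hm
    _ = q ^ s.card := by
        rw [Finset.prod_congr rfl fun i _ => hq i, Finset.prod_const, Finset.card_image_of_injOn hf]

variable {T : LFTree} {A : Ω → ℝ} {Aσ : List ℕ → Ω → ℝ}

theorem lintegral_ofReal_cumul_rpow (hA_nonneg : ∀ᵐ ω ∂μ, 0 ≤ A ω)
    (hmeas : ∀ v : T.Vertex, Measurable (Aσ v.1))
    (hid : ∀ v : T.Vertex, IdentDistrib (Aσ v.1) A μ μ)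
    (hind : iIndepFun (fun v : T.Vertex => Aσ v.1) μ) {x : ℝ} (hx : 0 ≤ x) (v : T.Vertex) :
    ∫⁻ ω, ENNReal.ofReal (cumul Aσ v.1 ω) ^ x ∂μ =
      (∫⁻ ω, ENNReal.ofReal (A ω ^ x) ∂μ) ^ v.1.length := by
  have hφ : Measurable fun a : ℝ => ENNReal.ofReal (a ^ x) :=
    (measurable_id.pow_const x).ennreal_ofReal
  let X : T.Vertex → Ω → ℝ≥0∞ := fun u ω => ENNReal.ofReal (Aσ u.1 ω ^ x)
  have hAσ : ∀ᵐ ω ∂μ, ∀ u : T.Vertex, 0 ≤ Aσ u.1 ω :=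
    ae_all_iff.2 fun u => (hid u).symm.ae_snd measurableSet_Ici hA_nonneg
  have hprod : (fun ω => ENNReal.ofReal (cumul Aσ v.1 ω) ^ x) =ᵐ[μ]
      fun ω => ∏ i ∈ Finset.range v.1.length, X (v.ancestor i) ω := by
    filter_upwards [hAσ] with ω hω
    rw [v.cumul_eq_prod_ancestor,
      ENNReal.ofReal_rpow_of_nonneg (Finset.prod_nonneg fun i _ => hω _) hx,
      ← Real.finsetProd_rpow _ _ fun i _ => hω _,
      ENNReal.ofReal_prod_of_nonneg fun i _ => Real.rpow_nonneg (hω _) x]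
  rw [lintegral_congr_ae hprod]
  exact (lintegral_prod_comp_eq_pow_of_iIndepFun (hind.comp _ fun _ => hφ)
    (fun u => hφ.comp (hmeas u)) (fun u => ((hid u).comp hφ).lintegral_eq) v.ancestor_injOn).trans
    (by rw [Finset.card_range]; rfl)

theorem ae_tsum_ofReal_cumul_lt_top (hA_nonneg : ∀ᵐ ω ∂μ, 0 ≤ A ω)
    (hmeas : ∀ v : T.Vertex, Measurable (Aσ v.1))
    (hid : ∀ v : T.Vertex, IdentDistrib (Aσ v.1) A μ μ)
    (hind : iIndepFun (fun v : T.Vertex => Aσ v.1) μ) {x : ℝ} (hx₀ : 0 ≤ x) (hx₁ : x ≤ 1)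
    (hsum : ∑' v : T.Vertex, (∫⁻ ω, ENNReal.ofReal (A ω ^ x) ∂μ) ^ v.1.length ≠ ∞) :
    ∀ᵐ ω ∂μ, ∑' v : T.Vertex, ENNReal.ofReal (cumul Aσ v.1 ω) < ∞ := by
  have hCm : ∀ v : T.Vertex, Measurable fun ω => ENNReal.ofReal (cumul Aσ v.1 ω) ^ x := fun v =>
    (show Measurable (cumul Aσ v.1) from
      Finset.measurable_prod _ fun i _ => hmeas (v.ancestor i)).ennreal_ofReal.pow_const x
  have hint : ∫⁻ ω, ∑' v : T.Vertex, ENNReal.ofReal (cumul Aσ v.1 ω) ^ x ∂μ ≠ ∞ := by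
    rwa [lintegral_tsum fun v => (hCm v).aemeasurable,
      tsum_congr (lintegral_ofReal_cumul_rpow hA_nonneg hmeas hid hind hx₀)]
  filter_upwards [ae_lt_top (Measurable.tsum hCm) hint] with ω hω
  exact (ENNReal.tsum_ne_top_of_tsum_rpow_ne_top (fun v => ENNReal.ofReal_ne_top) hx₀ hx₁
    hω.ne).lt_top

theorem pval_pos [NeZero μ] (hA : Measurable A) (hApos : ∀ᵐ ω ∂μ, 0 < A ω) : 0 < pval μ A := by
  have hmin : 0 < ∫⁻ ω, ENNReal.ofReal (min (A ω) 1) ∂μ := by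
    refine pos_iff_ne_zero.2 fun h => ?_
    obtain ⟨ω, hpos, hzero⟩ :=
      (hApos.and ((lintegral_eq_zero_iff (hA.min measurable_const).ennreal_ofReal).1 h)).exists
    simp only [Pi.zero_apply, ENNReal.ofReal_eq_zero] at hzero
    exact (lt_min hpos one_pos).not_ge hzero
  refine hmin.trans_le (le_iInf₂ fun y hy => lintegral_mono_ae ?_)
  filter_upwards [hApos] with ω hω
  have hmin_pos : 0 < min (A ω) 1 := lt_min hω one_pos
  refine ENNReal.ofReal_le_ofReal ?_
  calc min (A ω) 1 = min (A ω) 1 ^ (1 : ℝ) := (Real.rpow_one _).symm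
    _ ≤ min (A ω) 1 ^ y := Real.rpow_le_rpow_of_exponent_ge hmin_pos (min_le_right _ _) hy.2
    _ ≤ A ω ^ y := Real.rpow_le_rpow hmin_pos.le (min_le_left _ _) hy.1

end RandomWeights

/-- Part (3) of Theorem 1 (Lyons–Pemantle): if `p · limsup_n M_n^{1/n} < 1`, where
`M_n` is the number of vertices at distance `n` from the root, then
`Σ_{σ ≠ root} p^{|σ|} < ∞`, and hence almost surely `Σ_{σ ≠ root} C_σ < ∞`. -/
theorem sum_C_lt_top_of_p_mul_growth_lt_one
    (T : LFTree) {Ω : Type*} [MeasurableSpace Ω] (μ : Measure Ω) [IsProbabilityMeasure μ]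
    (A : Ω → ℝ) (hA : Measurable A) (hApos : ∀ᵐ ω ∂μ, 0 < A ω)
    (Aσ : List ℕ → Ω → ℝ) (hmeas : ∀ v : T.Vertex, Measurable (Aσ v.1))
    (hid : ∀ v : T.Vertex, IdentDistrib (Aσ v.1) A μ μ)
    (hind : iIndepFun (fun v : T.Vertex => Aσ v.1) μ)
    (hgrowth : pval μ A *
        Filter.limsup (fun n : ℕ => (T.levelCard n : ℝ≥0∞) ^ ((n : ℝ)⁻¹)) Filter.atTop < 1) :
    (∑' v : T.Vertex, (pval μ A) ^ v.1.length < ∞) ∧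
      ∀ᵐ ω ∂μ, ∑' v : T.Vertex, ENNReal.ofReal (cumul Aσ v.1 ω) < ∞ := by
  set L := limsup (fun n : ℕ => (T.levelCard n : ℝ≥0∞) ^ ((n : ℝ)⁻¹)) atTop
  have hL₁ : 1 ≤ L := T.one_le_limsup_levelCard_rpow
  have hL_top : L ≠ ∞ := by
    rintro hL
    rw [hL, ENNReal.mul_top (pval_pos hA hApos).ne'] at hgrowth
    exact not_top_lt hgrowth
  obtain ⟨x, hx, hxL⟩ :=
    ENNReal.exists_mem_mul_lt_of_biInf_mul_lt (one_pos.trans_le hL₁).ne' hL_top hgrowth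
  set q := ∫⁻ ω, ENNReal.ofReal (A ω ^ x) ∂μ
  have hq_top : q ≠ ∞ := ((le_mul_of_one_le_right' hL₁).trans_lt hxL).ne_top
  have hsum : ∑' v : T.Vertex, q ^ v.1.length ≠ ∞ :=
    ne_top_of_le_ne_top (ENNReal.tsum_mul_pow_ne_top_of_mul_limsup_lt_one
      (fun n => ENNReal.natCast_ne_top _) hq_top hxL) (T.tsum_pow_length_le q)
  have hpq : pval μ A ≤ q := iInf₂_le x hx
  exact ⟨(ENNReal.tsum_le_tsum fun v => pow_le_pow_left' hpq _).trans_lt hsum.lt_top,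
    ae_tsum_ofReal_cumul_lt_top (hApos.mono fun _ h => h.le) hmeas hid hind hx.1 hx.2 hsum⟩
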